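/- Pair compression with disjoint classes commutes with substitution on non-crossing occurrences: let h be the homomorphism performing \Gamma_1\Gamma_2-pair compression. If for a word u with variables and a solution S every occurrence of a factor ab (a \in \Gamma_1, b \in \Gamma_2) in S(u) lies entirely within the image of a single variable or entirely within explicit letters of u, then h(S(u)) = S'(h(u)) where S'(x) = h(S(x)) and h(u) compresses only the explicit letters of u. -/

import Mathlib

/-- The word associated to a single symbol of `u`: an explicit letter stands for
itself, a variable for its image under the substitution `S`. -/
def seg {σ V : Type*} (S : V → List σ) : σ ⊕ V → List σ
  | Sum.inl a => [a]
  | Sum.inr x => S x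

def subst {σ V : Type*} (S : V → List σ) (u : List (σ ⊕ V)) : List σ :=
  (u.map (seg S)).flatten

/-- Pair compression on words: replace every occurrence of a factor `ab` with
`a ∈ Γ₁`, `b ∈ Γ₂` by the fresh letter `c a b`. -/
def pc {σ : Type*} [DecidableEq σ] (Γ1 Γ2 : Finset σ) (c : σ → σ → σ) : List σ → List σ
  | [] => []
  | [a] => [a]
  | a :: b :: l =>
    if a ∈ Γ1 ∧ b ∈ Γ2 then c a b :: pc Γ1 Γ2 c l
    else a :: pc Γ1 Γ2 c (b :: l)

/-- Pair compression performed only on the explicit letters of a word with variables. -/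
def pcE {σ V : Type*} [DecidableEq σ] (Γ1 Γ2 : Finset σ) (c : σ → σ → σ) :
    List (σ ⊕ V) → List (σ ⊕ V)
  | [] => []
  | Sum.inl a :: Sum.inl b :: l =>
    if a ∈ Γ1 ∧ b ∈ Γ2 then Sum.inl (c a b) :: pcE Γ1 Γ2 c l
    else Sum.inl a :: pcE Γ1 Γ2 c (Sum.inl b :: l)
  | s :: l => s :: pcE Γ1 Γ2 c l

/-! A `Γ₁Γ₂`-pair of `S(u)` either lies inside the image of one symbol of `u`, where the
compressed image `S'` handles it, or is made of two explicit letters, where `pcE` handles it.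
Everything else is a junction between images, and by hypothesis no pair sits there, so `pc`
splits along it; nonemptiness of the images makes the junction letters those of adjacent
symbols of `u`. -/

section PairCompression

variable {σ : Type*} [DecidableEq σ] (Γ1 Γ2 : Finset σ) (c : σ → σ → σ)

theorem pc_append (l₁ l₂ : List σ)
    (hj : ∀ a b, l₁.getLast? = some a → l₂.head? = some b → ¬(a ∈ Γ1 ∧ b ∈ Γ2)) :
    pc Γ1 Γ2 c (l₁ ++ l₂) = pc Γ1 Γ2 c l₁ ++ pc Γ1 Γ2 c l₂ := by
  induction l₁ using pc.induct (Γ1 := Γ1) (Γ2 := Γ2) with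
  | case1 => simp [pc]
  | case2 a =>
    cases l₂ with
    | nil => simp [pc]
    | cons b l₂ => simp [pc, hj a b rfl rfl]
  | case3 a b l hab ih =>
    cases l with
    | nil => simp [pc, hab]
    | cons t l =>
      rw [List.cons_append, List.cons_append, pc, if_pos hab,
        ih fun a' b' ha hb => hj a' b' (by simpa using ha) hb]
      simp [pc, hab]
  | case4 a b l hab ih =>
    rw [List.cons_append, List.cons_append, pc, if_neg hab, ← List.cons_append,
      ih fun a' b' ha hb => hj a' b' (by simpa using ha) hb]
    simp [pc, hab]

end PairCompression

section Substitution

variable {σ V : Type*}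

theorem seg_ne_nil {S : V → List σ} (hne : ∀ x, S x ≠ []) (s : σ ⊕ V) : seg S s ≠ [] := by
  cases s with
  | inl a => simp [seg]
  | inr x => exact hne x

theorem subst_nil (S : V → List σ) : subst S [] = [] := rfl

theorem subst_cons (S : V → List σ) (s : σ ⊕ V) (u : List (σ ⊕ V)) :
    subst S (s :: u) = seg S s ++ subst S u := by
  simp [subst]

theorem head?_subst_cons {S : V → List σ} (hne : ∀ x, S x ≠ []) (s : σ ⊕ V)
    (u : List (σ ⊕ V)) : (subst S (s :: u)).head? = (seg S s).head? := by
  obtain ⟨a, w, hw⟩ := List.exists_cons_of_ne_nil (seg_ne_nil hne s)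
  simp [subst_cons, hw]

theorem seg_pc [DecidableEq σ] (Γ1 Γ2 : Finset σ) (c : σ → σ → σ) (S : V → List σ)
    (s : σ ⊕ V) : seg (fun x => pc Γ1 Γ2 c (S x)) s = pc Γ1 Γ2 c (seg S s) := by
  cases s <;> rfl

theorem pcE_cons [DecidableEq σ] (Γ1 Γ2 : Finset σ) (c : σ → σ → σ) (s : σ ⊕ V)
    (u : List (σ ⊕ V)) (hs : ∀ a b w, s = Sum.inl a → u = Sum.inl b :: w → False) :
    pcE Γ1 Γ2 c (s :: u) = s :: pcE Γ1 Γ2 c u := by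
  rcases s with a | x
  · rcases u with _ | ⟨b | y, w⟩
    · rfl
    · exact (hs a b w rfl rfl).elim
    · rfl
  · rfl

end Substitution

theorem stmt_9_general {σ V : Type*} [DecidableEq σ] (Γ1 Γ2 : Finset σ) (c : σ → σ → σ)
    (S : V → List σ) (u : List (σ ⊕ V))
    (hne : ∀ x : V, S x ≠ [])
    (hnc : List.Chain'
      (fun s t => (∃ a b : σ, s = Sum.inl a ∧ t = Sum.inl b) ∨
        ∀ a b : σ, (seg S s).getLast? = some a → (seg S t).head? = some b →
          ¬(a ∈ Γ1 ∧ b ∈ Γ2)) u) :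
    pc Γ1 Γ2 c (subst S u) = subst (fun x => pc Γ1 Γ2 c (S x)) (pcE Γ1 Γ2 c u) := by
  induction u using pcE.induct (Γ1 := Γ1) (Γ2 := Γ2) with
  | case1 => rfl
  | case2 a b u hab ih =>
    simp only [subst_cons, seg, List.singleton_append, pc, pcE, if_pos hab, ← ih hnc.tail.tail]
  | case3 a b u hab ih =>
    simp only [subst_cons, seg, List.singleton_append, pc, pcE, if_neg hab] at ih ⊢
    rw [ih hnc.tail]
  | case4 s u hs ih =>
    have junction : ∀ a b, (seg S s).getLast? = some a → (subst S u).head? = some b →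
        ¬(a ∈ Γ1 ∧ b ∈ Γ2) := by
      intro a b ha hb
      rcases u with _ | ⟨t, w⟩
      · simp [subst_nil] at hb
      rcases hnc.rel_head? rfl with ⟨a', b', rfl, rfl⟩ | hst
      · exact (hs a' b' w rfl rfl).elim
      · exact hst a b ha (by rwa [← head?_subst_cons hne])
    rw [subst_cons, pc_append Γ1 Γ2 c _ _ junction, ih hnc.tail, pcE_cons Γ1 Γ2 c s u hs,
      subst_cons, seg_pc]

/-- if all variable images are nonempty and no occurrence of a factor
`ab` (`a ∈ Γ₁`, `b ∈ Γ₂`) in `S(u)` is crossing — i.e. along `u` every pair of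
adjacent symbols either consists of two explicit letters, or does not produce a
`Γ₁Γ₂`-pair at the junction of their images — then pair compression commutes with
substitution: `h(S(u)) = S'(h(u))` where `S'(x) = h(S(x))` and `h(u)` compresses only
the explicit letters of `u`. -/
theorem stmt_9 {σ V : Type*} [DecidableEq σ] (Γ1 Γ2 : Finset σ) (c : σ → σ → σ)
    (hd : Disjoint Γ1 Γ2) (S : V → List σ) (u : List (σ ⊕ V))
    (hne : ∀ x : V, S x ≠ [])
    (hnc : List.Chain'
      (fun s t => (∃ a b : σ, s = Sum.inl a ∧ t = Sum.inl b) ∨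
        ∀ a b : σ, (seg S s).getLast? = some a → (seg S t).head? = some b →
          ¬(a ∈ Γ1 ∧ b ∈ Γ2)) u) :
    pc Γ1 Γ2 c (subst S u) = subst (fun x => pc Γ1 Γ2 c (S x)) (pcE Γ1 Γ2 c u) :=
  stmt_9_general Γ1 Γ2 c S u hne hnc
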